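/- arXiv:2006.10253 — 3 statements merged into one kernel-verified Lean document; each statement's English description precedes it below -/
import Mathlib

section
/- Let p, e be distinct points in the plane, 0 < ρ < 1, and let A = {X : dist(X,e) = ρ·dist(X,p)} be the Apollonius circle. Then the point T = e + (ρ/(1+ρ))·(p - e) lies on A, and for every X ∈ A, dist(e, T) ≤ dist(e, X); moreover dist(e,T) = ρ·dist(p,e)/(1+ρ). -/
/-! The point `T` divides the segment `[e, p]` in the ratio `ρ : 1`, so it lies on the Apollonius
circle, at distance `ρ/(1+ρ) · dist p e` from `e`. Conversely, for `X` on the circle the triangle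
inequality `dist p e ≤ dist p X + dist X e = (1 + 1/ρ) · dist X e` shows that no point of the circle
is closer to `e`. -/

open AffineMap

theorem mul_dist_le_one_add_mul_dist_of_dist_eq_mul_dist {α : Type*} [PseudoMetricSpace α]
    {p e X : α} {ρ : ℝ} (hρ : 0 ≤ ρ) (hX : dist X e = ρ * dist X p) :
    ρ * dist p e ≤ (1 + ρ) * dist e X :=
  calc ρ * dist p e ≤ ρ * (dist X p + dist X e) :=
        mul_le_mul_of_nonneg_left (dist_triangle_left p e X) hρ
    _ = (1 + ρ) * dist e X := by rw [dist_comm e X, hX]; ring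

section LineMap

variable {V P : Type*} [NormedAddCommGroup V] [NormedSpace ℝ V] [MetricSpace P]
  [NormedAddTorsor V P] {ρ : ℝ}

theorem dist_lineMap_div_one_add_left (e p : P) (hρ : 0 ≤ ρ) :
    dist (lineMap e p (ρ / (1 + ρ))) e = ρ * dist e p / (1 + ρ) := by
  rw [dist_lineMap_left, Real.norm_of_nonneg (by positivity), div_mul_eq_mul_div]

theorem dist_lineMap_div_one_add_right (e p : P) (hρ : 0 ≤ ρ) :
    dist (lineMap e p (ρ / (1 + ρ))) p = dist e p / (1 + ρ) := by
  have h1ρ : 1 + ρ ≠ 0 := by positivity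
  rw [dist_lineMap_right, show 1 - ρ / (1 + ρ) = 1 / (1 + ρ) by field_simp; ring,
    Real.norm_of_nonneg (by positivity), one_div_mul_eq_div]

theorem dist_lineMap_div_one_add_left_eq_mul_dist_right (e p : P) (hρ : 0 ≤ ρ) :
    dist (lineMap e p (ρ / (1 + ρ))) e = ρ * dist (lineMap e p (ρ / (1 + ρ))) p := by
  rw [dist_lineMap_div_one_add_left e p hρ, dist_lineMap_div_one_add_right e p hρ, mul_div_assoc]

end LineMap

theorem apollonius_nearest_point_general
    (p e : EuclideanSpace ℝ (Fin 2)) (ρ : ℝ)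
    (hρ0 : 0 < ρ) :
    let A := {X : EuclideanSpace ℝ (Fin 2) | dist X e = ρ * dist X p}
    let T := e + (ρ / (1 + ρ)) • (p - e)
    T ∈ A ∧ (∀ X ∈ A, dist e T ≤ dist e X) ∧
      dist e T = ρ * dist p e / (1 + ρ) := by
  intro A T
  have hT : T = lineMap e p (ρ / (1 + ρ)) := by rw [lineMap_apply_module', add_comm]
  have heT : dist e T = ρ * dist p e / (1 + ρ) := by
    rw [dist_comm, hT, dist_lineMap_div_one_add_left e p hρ0.le, dist_comm e p]
  refine ⟨?_, fun X hX => ?_, heT⟩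
  · rw [hT]
    exact dist_lineMap_div_one_add_left_eq_mul_dist_right e p hρ0.le
  · rw [heT, div_le_iff₀' (by positivity)]
    exact mul_dist_le_one_add_mul_dist_of_dist_eq_mul_dist hρ0.le hX

theorem apollonius_nearest_point
    (p e : EuclideanSpace ℝ (Fin 2)) (ρ : ℝ)
    (hpe : p ≠ e) (hρ0 : 0 < ρ) (hρ1 : ρ < 1) :
    let A := {X : EuclideanSpace ℝ (Fin 2) | dist X e = ρ * dist X p}
    let T := e + (ρ / (1 + ρ)) • (p - e)
    T ∈ A ∧ (∀ X ∈ A, dist e T ≤ dist e X) ∧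
      dist e T = ρ * dist p e / (1 + ρ) :=
  apollonius_nearest_point_general p e ρ hρ0
end

section
/- Consider a pursuer at p moving with speed u under constant bearing against an evader at e moving with speed v < u, with relative distance r(t) = dist(p(t), e(t)). If the pursuer's velocity satisfies the constant-bearing condition, i.e., the component of the relative velocity perpendicular to the line of sight is zero, and the pursuer closes along the line of sight, then ṙ(t) = v·cos(θ_E - φ) - u·cos(θ_P - φ) ≤ -(u - v) < 0, where φ is the line-of-sight angle and θ_E, θ_P are the evader's and pursuer's heading angles satisfying u·sin(θ_P - φ) = v·sin(θ_E - φ). -/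
open Real

theorem hasDerivAt_sqrt_sq_add_sq_of_polar {f g : ℝ → ℝ} {f' g' ρ φ t : ℝ}
    (hf : HasDerivAt f f' t) (hg : HasDerivAt g g' t) (hρ : 0 < ρ)
    (hfρ : cos φ * ρ = f t) (hgρ : sin φ * ρ = g t) :
    HasDerivAt (fun s => √(f s ^ 2 + g s ^ 2)) (f' * cos φ + g' * sin φ) t := by
  have hnorm : f t ^ 2 + g t ^ 2 = ρ ^ 2 := by
    rw [← hfρ, ← hgρ]
    linear_combination ρ ^ 2 * sin_sq_add_cos_sq φ
  have hsq : HasDerivAt (fun s => f s ^ 2 + g s ^ 2) (2 * f t * f' + 2 * g t * g') t :=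
    ((hf.pow 2).add (hg.pow 2)).congr_deriv (by norm_num)
  refine (hsq.sqrt (by rw [hnorm]; positivity)).congr_deriv ?_
  rw [hnorm, sqrt_sq hρ.le, ← hfρ, ← hgρ]
  field_simp

theorem sub_le_mul_cos_sub_mul_cos {u v α β : ℝ} (hv : 0 ≤ v) (hvu : v ≤ u)
    (hsin : u * sin α = v * sin β) (hcos : 0 ≤ cos α) :
    u - v ≤ u * cos α - v * cos β := by
  have hx : 0 ≤ u * cos α := mul_nonneg (hv.trans hvu) hcos
  have hsq : (u * cos α) ^ 2 = u ^ 2 - v ^ 2 + (v * cos β) ^ 2 := by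
    linear_combination u ^ 2 * sin_sq_add_cos_sq α - v ^ 2 * sin_sq_add_cos_sq β
      - (u * sin α + v * sin β) * hsin
  rcases le_or_gt (u - v + v * cos β) 0 with hneg | hpos
  · linarith
  · -- after squaring, via `hsq`, this is `0 ≤ v * (u - v) * (1 - cos β)`
    have hle : (u - v + v * cos β) ^ 2 ≤ (u * cos α) ^ 2 := by
      nlinarith [mul_nonneg (mul_nonneg hv (sub_nonneg.2 hvu)) (sub_nonneg.2 (cos_le_one β))]
    nlinarith [(pow_le_pow_iff_left₀ hpos.le hx two_ne_zero).1 hle]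

theorem constant_bearing_closing_rate
    (xP yP xE yE θP θE φ r : ℝ → ℝ) (u v t : ℝ)
    (hv : 0 ≤ v) (huv : v < u)
    (hr : ∀ s, r s = Real.sqrt ((xE s - xP s) ^ 2 + (yE s - yP s) ^ 2))
    (hrpos : 0 < r t)
    (hφcos : Real.cos (φ t) * r t = xE t - xP t)
    (hφsin : Real.sin (φ t) * r t = yE t - yP t)
    (hxP : HasDerivAt xP (u * Real.cos (θP t)) t)
    (hyP : HasDerivAt yP (u * Real.sin (θP t)) t)
    (hxE : HasDerivAt xE (v * Real.cos (θE t)) t)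
    (hyE : HasDerivAt yE (v * Real.sin (θE t)) t)
    (hcb : u * Real.sin (θP t - φ t) = v * Real.sin (θE t - φ t))
    (hclose : 0 ≤ Real.cos (θP t - φ t)) :
    HasDerivAt r (v * Real.cos (θE t - φ t) - u * Real.cos (θP t - φ t)) t ∧
      v * Real.cos (θE t - φ t) - u * Real.cos (θP t - φ t) ≤ -(u - v) := by
  refine ⟨?_, by linarith [sub_le_mul_cos_sub_mul_cos hv huv.le hcb hclose]⟩
  rw [funext hr]
  refine (hasDerivAt_sqrt_sq_add_sq_of_polar (hxE.sub hxP) (hyE.sub hyP) hrpos hφcos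
    hφsin).congr_deriv ?_
  rw [cos_sub, cos_sub]
  ring
end

section
/- Let e be a point, and let A₁, ..., Aₙ be circles each containing e strictly in its interior (each Aᵢ is the sphere of some closed ball Bᵢ with e ∈ interior Bᵢ). For every unit vector w, there exists a unique s* > 0 such that X = e + s*·w belongs to ∪ᵢ Aᵢ and the open segment {e + s·w : 0 < s < s*} is disjoint from ∪ᵢ Aᵢ; i.e., the Apollonius boundary B = {X ∈ ∪ᵢAᵢ : segment(e,X) ∩ (∪ᵢAᵢ) = {X}} intersects every ray from e in exactly one point. -/
theorem apollonius_boundary_ray_unique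
    (e : EuclideanSpace ℝ (Fin 2)) (n : ℕ) (hn : 0 < n)
    (c : Fin n → EuclideanSpace ℝ (Fin 2)) (R : Fin n → ℝ)
    (hin : ∀ i, dist e (c i) < R i)
    (w : EuclideanSpace ℝ (Fin 2)) (hw : ‖w‖ = 1) :
    ∃! s : ℝ, 0 < s ∧
      (e + s • w) ∈ (⋃ i, Metric.sphere (c i) (R i)) ∧
      ∀ s' : ℝ, 0 < s' → s' < s →
        (e + s' • w) ∉ (⋃ i, Metric.sphere (c i) (R i)) := by
  set U : Set (EuclideanSpace ℝ (Fin 2)) := ⋃ i, Metric.sphere (c i) (R i) with hU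
  have hUclosed : IsClosed U :=
    isClosed_iUnion_of_finite fun i => Metric.isClosed_sphere
  have hcont : Continuous (fun s : ℝ => e + s • w) := by continuity
  have hray : ∀ s : ℝ, 0 ≤ s → dist (e + s • w) e = s := by
    intro s hs
    rw [dist_eq_norm, add_sub_cancel_left, norm_smul, Real.norm_eq_abs, hw,
      mul_one, abs_of_nonneg hs]
  have i0 : Fin n := ⟨0, hn⟩
  -- existence of a point of U on the ray
  have hex : ∃ s : ℝ, 0 < s ∧ (e + s • w) ∈ U := by
    set f : ℝ → ℝ := fun s => dist (e + s • w) (c i0) with hf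
    have hfc : ContinuousOn f (Set.Icc 0 (R i0 + dist e (c i0))) :=
      ((Continuous.dist (hcont) continuous_const)).continuousOn
    have hM : (0:ℝ) ≤ R i0 + dist e (c i0) := by
      have := hin i0
      have := dist_nonneg (x := e) (y := c i0)
      linarith
    have h0 : f 0 = dist e (c i0) := by simp [hf]
    have hMval : R i0 ≤ f (R i0 + dist e (c i0)) := by
      have h1 : dist (e + (R i0 + dist e (c i0)) • w) e = R i0 + dist e (c i0) :=
        hray _ hM
      have h2 := dist_triangle (e + (R i0 + dist e (c i0)) • w) (c i0) e
      rw [dist_comm (c i0) e] at h2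
      rw [h1] at h2
      simpa [hf] using by linarith
    have hsub := intermediate_value_Icc hM hfc
    have hmem : R i0 ∈ Set.Icc (f 0) (f (R i0 + dist e (c i0))) :=
      ⟨by rw [h0]; exact (hin i0).le, hMval⟩
    obtain ⟨s, hsIcc, hfs⟩ := hsub hmem
    refine ⟨s, ?_, ?_⟩
    · rcases hsIcc.1.lt_or_eq with h | h
      · exact h
      · exfalso; rw [← h] at hfs; rw [h0] at hfs; exact absurd hfs (ne_of_lt (hin i0))
    · exact Set.mem_iUnion.2 ⟨i0, hfs⟩
  obtain ⟨s₀, hs₀pos, hs₀U⟩ := hex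
  set S : Set ℝ := {s : ℝ | 0 ≤ s ∧ (e + s • w) ∈ U} with hS
  have hSclosed : IsClosed S := by
    have : S = Set.Ici (0:ℝ) ∩ (fun s : ℝ => e + s • w) ⁻¹' U := by
      ext s; simp [hS, Set.mem_Ici]
    rw [this]
    exact isClosed_Ici.inter (hUclosed.preimage hcont)
  have hSne : S.Nonempty := ⟨s₀, hs₀pos.le, hs₀U⟩
  have hSbdd : BddBelow S := ⟨0, fun s hs => hs.1⟩
  set t := sInf S with ht
  have htS : t ∈ S := hSclosed.csInf_mem hSne hSbdd
  -- lower bound: every element of S is ≥ δ > 0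
  have hδ : ∀ s ∈ S, ∃ i, dist e (c i) < R i ∧ dist (e + s • w) (c i) = R i := by
    intro s hs
    obtain ⟨i, hi⟩ := Set.mem_iUnion.1 hs.2
    exact ⟨i, hin i, hi⟩
  have htpos : 0 < t := by
    rcases htS.1.lt_or_eq with h | h
    · exact h
    · exfalso
      obtain ⟨i, _, hi⟩ := hδ t htS
      rw [← h] at hi
      simp at hi
      exact absurd hi (ne_of_lt (hin i))
  refine ⟨t, ⟨htpos, htS.2, ?_⟩, ?_⟩
  · intro s' hs' hlt hmem
    have : s' ∈ S := ⟨hs'.le, hmem⟩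
    exact absurd (csInf_le hSbdd this) (not_le.2 hlt)
  · rintro s ⟨hspos, hsU, hsmin⟩
    have hsS : s ∈ S := ⟨hspos.le, hsU⟩
    have h1 : t ≤ s := csInf_le hSbdd hsS
    rcases h1.lt_or_eq with h | h
    · exact absurd htS.2 (hsmin t htpos h)
    · exact h.symm
end
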